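/- Define, for β, γ > 0 with β ≠ γ, Λ(β,γ) = 2(β+γ+e^{−β−γ}−1)/(1+γ/β)² + [(e^{−2β}−1)(γ/β) − 2e^{−(β+γ)} + e^{−2β} + 1]/(1−γ²/β²). Then for fixed γ and small β, Λ(β,γ) = 4β²(γ−1+e^{−γ})/γ² + o(β²); i.e. the limit of Λ(β,γ)/β² as β → 0⁺ equals 4(γ−1+e^{−γ})/γ². -/
import Mathlib

open Real Filter Topology

/-- The forth-and-back dephasing exponent Λ(β,γ). -/
noncomputable def Lambda (β γ : ℝ) : ℝ :=
  2 * (β + γ + Real.exp (-β - γ) - 1) / (1 + γ / β) ^ 2 +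
    ((Real.exp (-2 * β) - 1) * (γ / β) - 2 * Real.exp (-(β + γ)) +
        Real.exp (-2 * β) + 1) / (1 - γ ^ 2 / β ^ 2)

lemma slope_lim : Tendsto (fun β : ℝ => (Real.exp (-2 * β) - 1) / β)
    (𝓝[≠] (0 : ℝ)) (𝓝 (-2)) := by
  have h : HasDerivAt (fun β : ℝ => Real.exp (-2 * β)) (-2) 0 := by
    have h1 : HasDerivAt (fun β : ℝ => -2 * β) (-2) 0 := by
      simpa using (hasDerivAt_id (0 : ℝ)).const_mul (-2)
    simpa using h1.exp
  have := hasDerivAt_iff_tendsto_slope.mp h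
  refine this.congr' ?_
  filter_upwards [self_mem_nhdsWithin] with β hβ
  simp [slope, hβ, div_eq_inv_mul]

/-- For fixed γ > 0, Λ(β,γ)/β² → 4(γ−1+e^{−γ})/γ² as β → 0⁺. -/
theorem lambda_short_time (γ : ℝ) (hγ : 0 < γ) :
    Tendsto (fun β => Lambda β γ / β ^ 2) (𝓝[>] (0 : ℝ))
      (𝓝 (4 * (γ - 1 + Real.exp (-γ)) / γ ^ 2)) := by
  have hγ2 : γ ^ 2 ≠ 0 := pow_ne_zero _ hγ.ne'
  -- target expressions
  set A : ℝ → ℝ := fun β => 2 * (β + γ + Real.exp (-β - γ) - 1) / (β + γ) ^ 2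
  set B : ℝ → ℝ := fun β =>
    ((Real.exp (-2 * β) - 1) / β * γ - 2 * Real.exp (-(β + γ)) +
      Real.exp (-2 * β) + 1) / (β ^ 2 - γ ^ 2)
  have hA : Tendsto A (𝓝[>] (0 : ℝ)) (𝓝 (2 * (γ + Real.exp (-γ) - 1) / γ ^ 2)) := by
    have : ContinuousAt (fun β : ℝ => 2 * (β + γ + Real.exp (-β - γ) - 1) / (β + γ) ^ 2) 0 := by
      apply ContinuousAt.div
      · fun_prop
      · fun_prop
      · simpa using hγ2
    have := this.tendsto.mono_left (nhdsWithin_le_nhds (s := Set.Ioi (0:ℝ)))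
    simpa [A, mul_comm] using this
  have hnum : Tendsto (fun β : ℝ => (Real.exp (-2 * β) - 1) / β * γ -
      2 * Real.exp (-(β + γ)) + Real.exp (-2 * β) + 1) (𝓝[>] (0 : ℝ))
      (𝓝 ((-2) * γ - 2 * Real.exp (-γ) + 1 + 1)) := by
    have h1 : Tendsto (fun β : ℝ => (Real.exp (-2 * β) - 1) / β) (𝓝[>] (0 : ℝ)) (𝓝 (-2)) :=
      slope_lim.mono_left (nhdsWithin_mono _ fun x hx => ne_of_gt hx)
    have h2 : Tendsto (fun β : ℝ => 2 * Real.exp (-(β + γ))) (𝓝[>] (0 : ℝ))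
        (𝓝 (2 * Real.exp (-γ))) := by
      have : ContinuousAt (fun β : ℝ => 2 * Real.exp (-(β + γ))) 0 := by fun_prop
      simpa using this.tendsto.mono_left (nhdsWithin_le_nhds (s := Set.Ioi (0:ℝ)))
    have h3 : Tendsto (fun β : ℝ => Real.exp (-2 * β)) (𝓝[>] (0 : ℝ)) (𝓝 1) := by
      have : ContinuousAt (fun β : ℝ => Real.exp (-2 * β)) 0 := by fun_prop
      simpa using this.tendsto.mono_left (nhdsWithin_le_nhds (s := Set.Ioi (0:ℝ)))
    exact (((h1.mul_const γ).sub h2).add h3).add tendsto_const_nhds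
  have hden : Tendsto (fun β : ℝ => β ^ 2 - γ ^ 2) (𝓝[>] (0 : ℝ)) (𝓝 (-(γ ^ 2))) := by
    have : ContinuousAt (fun β : ℝ => β ^ 2 - γ ^ 2) 0 := by fun_prop
    simpa using this.tendsto.mono_left (nhdsWithin_le_nhds (s := Set.Ioi (0:ℝ)))
  have hB : Tendsto B (𝓝[>] (0 : ℝ))
      (𝓝 (((-2) * γ - 2 * Real.exp (-γ) + 1 + 1) / (-(γ ^ 2)))) :=
    hnum.div hden (by simpa using hγ2)
  have hsum := hA.add hB
  have hval : 2 * (γ + Real.exp (-γ) - 1) / γ ^ 2 +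
      ((-2) * γ - 2 * Real.exp (-γ) + 1 + 1) / (-(γ ^ 2)) =
      4 * (γ - 1 + Real.exp (-γ)) / γ ^ 2 := by
    field_simp
    ring
  rw [hval] at hsum
  refine hsum.congr' ?_
  filter_upwards [self_mem_nhdsWithin, Ioo_mem_nhdsGT hγ] with β hβ hβγ
  have hβ0 : (β : ℝ) ≠ 0 := ne_of_gt hβ
  have hβγne : β + γ ≠ 0 := ne_of_gt (add_pos hβ hγ)
  have hβγne2 : β ^ 2 - γ ^ 2 ≠ 0 := by
    have : β < γ := hβγ.2
    nlinarith [hβγ.1, hγ]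
  simp only [Lambda, A, B]
  field_simp
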